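/- arXiv:2406.16268 — 2 statements merged into one kernel-verified Lean document; each statement's English description precedes it below -/
import Mathlib

section
/- If the vertex set of a graph G can be partitioned into c independent sets I_1, ..., I_c, then every k-plex S contained in G satisfies |S| ≤ Σ_{i=1}^{c} min(|I_i|, k). -/
open scoped Classical
open Finset

/-- A `k`-plex: every vertex of `S` has at least `|S| - k` neighbors inside `S`. -/
def IsKPlex {V : Type*} (G : SimpleGraph V) (k : ℕ) (S : Finset V) : Prop :=
  ∀ v ∈ S, S.card ≤ (S.filter (fun w => G.Adj v w)).card + k

/-! A vertex `v` of `S ∩ I` has all its neighbours in `S \ I`, so its `≥ |S| - k` neighbours in `S`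
leave room for at most `k` vertices of `S ∩ I`. Summing over the colour classes gives the bound. -/

theorem IsKPlex.card_inter_le_of_isIndepSet {V : Type*} {G : SimpleGraph V} {k : ℕ}
    {S I : Finset V} (hS : IsKPlex G k S) (hI : G.IsIndepSet (I : Set V)) :
    (S ∩ I).card ≤ k := by
  obtain h | ⟨v, hv⟩ := (S ∩ I).eq_empty_or_nonempty
  · simp [h]
  obtain ⟨hvS, hvI⟩ := mem_inter.mp hv
  have hnbrs : S.filter (fun w => G.Adj v w) ⊆ S \ (S ∩ I) := fun w hw => by
    obtain ⟨hwS, hvw⟩ := mem_filter.mp hw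
    refine mem_sdiff.mpr ⟨hwS, fun hwSI => ?_⟩
    exact hI hvI (mem_inter.mp hwSI).2 hvw.ne hvw
  have hdeg := (card_le_card hnbrs).trans_eq (card_sdiff_of_subset inter_subset_left)
  have hSI : (S ∩ I).card ≤ S.card := card_le_card inter_subset_left
  have := hS v hvS
  omega

theorem Finset.card_le_sum_card_inter {α ι : Type*} [DecidableEq α] {S : Finset α}
    {P : Finset ι} {t : ι → Finset α} (hcover : ∀ v ∈ S, ∃ i ∈ P, v ∈ t i) :
    S.card ≤ ∑ i ∈ P, (S ∩ t i).card :=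
  calc S.card ≤ (P.biUnion fun i => S ∩ t i).card := card_le_card fun v hv => by
        obtain ⟨i, hi, hvi⟩ := hcover v hv
        exact mem_biUnion.mpr ⟨i, hi, mem_inter.mpr ⟨hv, hvi⟩⟩
    _ ≤ ∑ i ∈ P, (S ∩ t i).card := card_biUnion_le

theorem kplex_color_bound_general {V : Type*} (G : SimpleGraph V) (k : ℕ)
    (Part : Finset (Finset V))
    (hcover : ∀ v : V, ∃ I ∈ Part, v ∈ I)
    (hind : ∀ I ∈ Part, ∀ u ∈ I, ∀ w ∈ I, ¬ G.Adj u w)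
    (S : Finset V) (hS : IsKPlex G k S) :
    S.card ≤ ∑ I ∈ Part, min I.card k :=
  calc S.card ≤ ∑ I ∈ Part, (S ∩ I).card :=
        card_le_sum_card_inter (t := id) fun v _ => hcover v
    _ ≤ ∑ I ∈ Part, min I.card k := sum_le_sum fun I hI =>
        le_min (card_le_card inter_subset_right)
          (hS.card_inter_le_of_isIndepSet fun u hu w hw _ => hind I hI u hu w hw)

/-- Color bound: if the vertex set of `G` is partitioned into independent sets,
then every `k`-plex `S` satisfies `|S| ≤ Σ_i min(|I_i|, k)`. -/
theorem kplex_color_bound {V : Type*} [Fintype V] (G : SimpleGraph V) (k : ℕ)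
    (Part : Finset (Finset V))
    (hdisj : ∀ I ∈ Part, ∀ J ∈ Part, I ≠ J → Disjoint I J)
    (hcover : ∀ v : V, ∃ I ∈ Part, v ∈ I)
    (hind : ∀ I ∈ Part, ∀ u ∈ I, ∀ w ∈ I, ¬ G.Adj u w)
    (S : Finset V) (hS : IsKPlex G k S) :
    S.card ≤ ∑ I ∈ Part, min I.card k :=
  kplex_color_bound_general G k Part hcover hind S hS
end

section
/- In a k-plex S and an independent set I ⊆ S containing a vertex x, every vertex of I \ {x} is a non-neighbor of x inside S; since x has at most k - 1 non-neighbors in S besides itself, |I| ≤ k. Consequently, for a growing k-plex C with candidate set P colored into independent sets I_1, ..., I_c, and u ∈ P, any k-plex S with C ∪ {u} ⊆ S ⊆ C ∪ P satisfies |S| ≤ Σ_{j: u ∉ I_j} min(|I_j ∩ N(u)|, k) + (k - |C \ N(u)|) + |C| + 1. -/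
/-!
In a `k`-plex `S` every vertex has at most `k` non-neighbours in `S` (itself included), and an
independent set `I ⊆ S` lies inside the non-neighbourhood of any of its vertices, so `|I| ≤ k`.
For the colour-degree bound, split `S` at `u`: the non-neighbours of `u` number at most `k`, while
each neighbour of `u` lies either in `C` or in a colour class avoiding `u` (a class containing `u`
is independent, so has no neighbour of `u`); within a class, `S` picks at most `k` of them.
-/

open scoped Classical
open Finset

namespace IsKPlex

variable {V : Type*} {G : SimpleGraph V} {k : ℕ} {S : Finset V}

theorem card_filter_not_adj_le (hS : IsKPlex G k S) {v : V} (hv : v ∈ S) :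
    #(S.filter (¬ G.Adj v ·)) ≤ k := by
  have := S.card_filter_add_card_filter_not (G.Adj v ·)
  have := hS v hv
  omega

theorem card_le_of_isIndepSet (hS : IsKPlex G k S) {I : Finset V} (hIS : I ⊆ S)
    (hI : G.IsIndepSet I) : #I ≤ k := by
  obtain rfl | ⟨x, hx⟩ := I.eq_empty_or_nonempty
  · exact Nat.zero_le k
  have hI_nonadj : I ⊆ S.filter (¬ G.Adj x ·) := fun y hy =>
    mem_filter.mpr ⟨hIS hy, fun hxy => hI hx hy hxy.ne hxy⟩
  exact (card_le_card hI_nonadj).trans (hS.card_filter_not_adj_le (hIS hx))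

theorem card_filter_adj_le_sum_min (hS : IsKPlex G k S) {C P : Finset V}
    {Part : Finset (Finset V)} (hcover : ∀ w ∈ P, ∃ I ∈ Part, w ∈ I)
    (hind : ∀ I ∈ Part, G.IsIndepSet I) (hSP : S ⊆ C ∪ P) (u : V) :
    #(S.filter (G.Adj u ·)) ≤
      (∑ I ∈ Part.filter (u ∉ ·), min #(I.filter (G.Adj u ·)) k) + #(C.filter (G.Adj u ·)) := by
  set Q := Part.filter (u ∉ ·)
  have hcovered : S.filter (G.Adj u ·) ⊆
      Q.biUnion (fun I => I.filter (G.Adj u ·) ∩ S) ∪ C.filter (G.Adj u ·) := by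
    intro w hw
    obtain ⟨hwS, huw⟩ := mem_filter.mp hw
    rcases mem_union.mp (hSP hwS) with hwC | hwP
    · exact mem_union_right _ (mem_filter.mpr ⟨hwC, huw⟩)
    · obtain ⟨I, hI, hwI⟩ := hcover w hwP
      have huI : u ∉ I := fun huI => hind I hI huI hwI huw.ne huw
      exact mem_union_left _ (mem_biUnion.mpr
        ⟨I, mem_filter.mpr ⟨hI, huI⟩, mem_inter.mpr ⟨mem_filter.mpr ⟨hwI, huw⟩, hwS⟩⟩)
  have hclass : ∀ I ∈ Q, #(I.filter (G.Adj u ·) ∩ S) ≤ min #(I.filter (G.Adj u ·)) k :=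
    fun I hI => le_min (card_le_card inter_subset_left)
      (hS.card_le_of_isIndepSet inter_subset_right
        ((hind I (mem_filter.mp hI).1).mono
          (coe_subset.mpr (inter_subset_left.trans (filter_subset _ _)))))
  calc #(S.filter (G.Adj u ·))
      ≤ #(Q.biUnion (fun I => I.filter (G.Adj u ·) ∩ S)) + #(C.filter (G.Adj u ·)) :=
        (card_le_card hcovered).trans (card_union_le _ _)
    _ ≤ (∑ I ∈ Q, #(I.filter (G.Adj u ·) ∩ S)) + #(C.filter (G.Adj u ·)) :=
        Nat.add_le_add_right card_biUnion_le _
    _ ≤ _ := Nat.add_le_add_right (sum_le_sum hclass) _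

end IsKPlex

theorem kplex_color_degree_general {V : Type*} (G : SimpleGraph V) (k : ℕ)
    (C P : Finset V)
    (Part : Finset (Finset V))
    (hcover : ∀ w ∈ P, ∃ I ∈ Part, w ∈ I)
    (hind : ∀ I ∈ Part, ∀ x ∈ I, ∀ y ∈ I, ¬ G.Adj x y)
    (u : V)
    (S : Finset V) (hS : IsKPlex G k S)
    (huS : u ∈ S) (hSP : S ⊆ C ∪ P) :
    (∀ I ⊆ S, (∀ x ∈ I, ∀ y ∈ I, ¬ G.Adj x y) →
      ∀ x ∈ I, (∀ y ∈ I, y ≠ x → ¬ G.Adj x y) ∧ I.card ≤ k) ∧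
    S.card ≤ (∑ I ∈ Part.filter (fun I => u ∉ I),
        min ((I.filter (fun w => G.Adj u w)).card) k) +
      (k - (C.filter (fun x => ¬ G.Adj u x)).card) + C.card + 1 := by
  refine ⟨fun I hIS hI x hx => ⟨fun y hy _ => hI x hx y hy,
    hS.card_le_of_isIndepSet hIS fun a ha b hb _ => hI a ha b hb⟩, ?_⟩
  have hS_split := S.card_filter_add_card_filter_not (G.Adj u ·)
  have hC_split := C.card_filter_add_card_filter_not (G.Adj u ·)
  have hnonadj := hS.card_filter_not_adj_le huS
  have hadj := hS.card_filter_adj_le_sum_min hcover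
    (fun I hI x hx y hy _ => hind I hI x hx y hy) hSP u
  omega

/-- In a `k`-plex `S`, an independent set `I ⊆ S` containing `x` consists (besides `x`)
of non-neighbors of `x`, hence `|I| ≤ k`.  Consequently, for a growing `k`-plex `C`
with candidate set `P` colored into independent sets, and `u ∈ P`, any `k`-plex `S`
with `C ∪ {u} ⊆ S ⊆ C ∪ P` satisfies the color-degree bound
`|S| ≤ Σ_{j : u ∉ I_j} min(|I_j ∩ N(u)|, k) + (k - |C \ N(u)|) + |C| + 1`. -/
theorem kplex_color_degree {V : Type*} (G : SimpleGraph V) (k : ℕ)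
    (C P : Finset V) (hCP : Disjoint C P)
    (Part : Finset (Finset V))
    (hpart : ∀ I ∈ Part, ∀ J ∈ Part, I ≠ J → Disjoint I J)
    (hcover : ∀ w ∈ P, ∃ I ∈ Part, w ∈ I)
    (hsub : ∀ I ∈ Part, I ⊆ P)
    (hind : ∀ I ∈ Part, ∀ x ∈ I, ∀ y ∈ I, ¬ G.Adj x y)
    (u : V) (hu : u ∈ P)
    (S : Finset V) (hS : IsKPlex G k S)
    (hCS : C ⊆ S) (huS : u ∈ S) (hSP : S ⊆ C ∪ P) :
    (∀ I ⊆ S, (∀ x ∈ I, ∀ y ∈ I, ¬ G.Adj x y) →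
      ∀ x ∈ I, (∀ y ∈ I, y ≠ x → ¬ G.Adj x y) ∧ I.card ≤ k) ∧
    S.card ≤ (∑ I ∈ Part.filter (fun I => u ∉ I),
        min ((I.filter (fun w => G.Adj u w)).card) k) +
      (k - (C.filter (fun x => ¬ G.Adj u x)).card) + C.card + 1 :=
  kplex_color_degree_general G k C P Part hcover hind u S hS huS hSP
end
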